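/- Let v₂=(0,1,0), v₃=(0,0,1), v₅=(-1,-1,0), v₆=(1,2,1) in ℝ³. Then cone{v₂,v₃,v₅} ∪ cone{v₂,v₃,v₆} = cone{v₂,v₃,v₅,v₆}, and cone{v₂,v₃,v₅} ∩ cone{v₂,v₃,v₆} = cone{v₂,v₃}. (Inserting the 2-dimensional face ⟨v₂,v₃⟩ subdivides the quadrangular cone ⟨v₂,v₃,v₅,v₆⟩ of Σ into two simplicial cones.) -/

import Mathlib

/-!
Each of the simplicial cones `cone {v2, v3, v5}`, `cone {v2, v3, v6}`, `cone {v2, v3}` is cut out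
by explicit linear inequalities: a linear form that is nonnegative on the generators is
nonnegative on the cone, and conversely a point satisfying the inequalities is written by hand as
a nonnegative combination of the generators. The big cone lies in the half-spaces
`x 0 ≤ x 1`, `2 * x 0 ≤ x 1`, `0 ≤ x 2`, `x 0 ≤ x 2`, and the plane `x 0 = 0` through `v2`, `v3`
splits it: on the side `x 0 ≤ 0` these inequalities describe `cone {v2, v3, v5}`, on the side
`0 ≤ x 0` they describe `cone {v2, v3, v6}`, and the two cones meet exactly in that plane.
-/

def coneGen (S : Set (Fin 3 → ℝ)) : Set (Fin 3 → ℝ) :=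
  {x | ∃ (n : ℕ) (c : Fin n → ℝ) (v : Fin n → (Fin 3 → ℝ)),
      (∀ i, 0 ≤ c i) ∧ (∀ i, v i ∈ S) ∧ x = ∑ i, c i • v i}

def v1 : Fin 3 → ℝ := ![1, 0, 0]
def v2 : Fin 3 → ℝ := ![0, 1, 0]
def v3 : Fin 3 → ℝ := ![0, 0, 1]
def v4 : Fin 3 → ℝ := ![0, -1, -1]
def v5 : Fin 3 → ℝ := ![-1, -1, 0]
def v6 : Fin 3 → ℝ := ![1, 2, 1]

open Matrix

namespace PointedCone

variable {E : Type*} [AddCommGroup E] [Module ℝ E] {s : Set E}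

lemma smul_mem_hull {c : ℝ} {v : E} (hc : 0 ≤ c) (hv : v ∈ s) : c • v ∈ hull ℝ s :=
  (hull ℝ s).smul_mem hc (subset_hull hv)

lemma nonneg_of_mem_hull (φ : E →ₗ[ℝ] ℝ) (hs : ∀ v ∈ s, 0 ≤ φ v) {x : E}
    (hx : x ∈ hull ℝ s) : 0 ≤ φ x :=
  (Submodule.span_le (p := (positive ℝ ℝ).comap φ)).2 hs hx

end PointedCone

open PointedCone

lemma coneGen_eq_hull (S : Set (Fin 3 → ℝ)) : coneGen S = hull ℝ S := by
  ext x
  constructor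
  · rintro ⟨n, c, v, hc, hv, rfl⟩
    exact Submodule.sum_mem _ fun i _ ↦ smul_mem_hull (hc i) (hv i)
  · intro hx
    obtain ⟨n, c, v, rfl⟩ := Submodule.mem_span_set'.1 hx
    exact ⟨n, fun i ↦ c i, fun i ↦ v i, fun i ↦ (c i).2, fun i ↦ (v i).2,
      by simp [Nonneg.coe_smul]⟩

lemma coneGen_mono {S T : Set (Fin 3 → ℝ)} (h : S ⊆ T) : coneGen S ⊆ coneGen T := by
  rw [coneGen_eq_hull, coneGen_eq_hull]
  exact Submodule.span_mono h

lemma linear_nonneg_of_mem_coneGen {S : Set (Fin 3 → ℝ)} (a b c : ℝ)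
    (hS : ∀ v ∈ S, 0 ≤ a * v 0 + b * v 1 + c * v 2) {x : Fin 3 → ℝ} (hx : x ∈ coneGen S) :
    0 ≤ a * x 0 + b * x 1 + c * x 2 := by
  rw [coneGen_eq_hull] at hx
  simpa [dotProduct, Fin.sum_univ_three] using
    nonneg_of_mem_hull (dotProductBilin ℝ ℝ ![a, b, c])
      (by simpa [dotProduct, Fin.sum_univ_three] using hS) hx

lemma coneGen_v2_v3_v5 :
    coneGen {v2, v3, v5} = {x | x 0 ≤ 0 ∧ x 0 ≤ x 1 ∧ 0 ≤ x 2} := by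
  ext x
  constructor
  · intro hx
    have h₀ := linear_nonneg_of_mem_coneGen (-1) 0 0 (by simp [v2, v3, v5]) hx
    have h₁ := linear_nonneg_of_mem_coneGen (-1) 1 0 (by simp [v2, v3, v5]) hx
    have h₂ := linear_nonneg_of_mem_coneGen 0 0 1 (by simp [v2, v3, v5]) hx
    exact ⟨by linarith, by linarith, by linarith⟩
  · rintro ⟨h₀, h₁, h₂⟩
    have hx : x = (x 1 - x 0) • v2 + x 2 • v3 + (-x 0) • v5 := by
      ext i; fin_cases i <;> simp [v2, v3, v5]
    rw [hx, coneGen_eq_hull]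
    exact add_mem (add_mem (smul_mem_hull (by linarith) (by simp)) (smul_mem_hull h₂ (by simp)))
      (smul_mem_hull (by linarith) (by simp))

lemma coneGen_v2_v3_v6 :
    coneGen {v2, v3, v6} = {x | 0 ≤ x 0 ∧ 2 * x 0 ≤ x 1 ∧ x 0 ≤ x 2} := by
  ext x
  constructor
  · intro hx
    have h₀ := linear_nonneg_of_mem_coneGen 1 0 0 (by simp [v2, v3, v6]) hx
    have h₁ := linear_nonneg_of_mem_coneGen (-2) 1 0 (by simp [v2, v3, v6]) hx
    have h₂ := linear_nonneg_of_mem_coneGen (-1) 0 1 (by simp [v2, v3, v6]) hx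
    exact ⟨by linarith, by linarith, by linarith⟩
  · rintro ⟨h₀, h₁, h₂⟩
    have hx : x = (x 1 - 2 * x 0) • v2 + (x 2 - x 0) • v3 + x 0 • v6 := by
      ext i; fin_cases i <;> simp [v2, v3, v6]; ring
    rw [hx, coneGen_eq_hull]
    exact add_mem (add_mem (smul_mem_hull (by linarith) (by simp))
      (smul_mem_hull (by linarith) (by simp))) (smul_mem_hull h₀ (by simp))

lemma coneGen_v2_v3 :
    coneGen {v2, v3} = {x | x 0 = 0 ∧ 0 ≤ x 1 ∧ 0 ≤ x 2} := by
  ext x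
  constructor
  · intro hx
    have h₀ := linear_nonneg_of_mem_coneGen 1 0 0 (by simp [v2, v3]) hx
    have h₀' := linear_nonneg_of_mem_coneGen (-1) 0 0 (by simp [v2, v3]) hx
    have h₁ := linear_nonneg_of_mem_coneGen 0 1 0 (by simp [v2, v3]) hx
    have h₂ := linear_nonneg_of_mem_coneGen 0 0 1 (by simp [v2, v3]) hx
    exact ⟨by linarith, by linarith, by linarith⟩
  · rintro ⟨h₀, h₁, h₂⟩
    have hx : x = x 1 • v2 + x 2 • v3 := by
      ext i; fin_cases i <;> simp [v2, v3, h₀]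
    rw [hx, coneGen_eq_hull]
    exact add_mem (smul_mem_hull h₁ (by simp)) (smul_mem_hull h₂ (by simp))

lemma coneGen_v2_v3_v5_v6_subset :
    coneGen {v2, v3, v5, v6} ⊆ coneGen {v2, v3, v5} ∪ coneGen {v2, v3, v6} := by
  intro x hx
  have h₁ := linear_nonneg_of_mem_coneGen (-1) 1 0 (by simp [v2, v3, v5, v6]) hx
  have h₂ := linear_nonneg_of_mem_coneGen (-2) 1 0 (by simp [v2, v3, v5, v6]) hx
  have h₃ := linear_nonneg_of_mem_coneGen 0 0 1 (by simp [v2, v3, v5, v6]) hx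
  have h₄ := linear_nonneg_of_mem_coneGen (-1) 0 1 (by simp [v2, v3, v5, v6]) hx
  rw [coneGen_v2_v3_v5, coneGen_v2_v3_v6]
  rcases le_total (x 0) 0 with h | h
  · exact Or.inl ⟨h, by linarith, by linarith⟩
  · exact Or.inr ⟨h, by linarith, by linarith⟩

theorem stmt8 :
    coneGen {v2, v3, v5} ∪ coneGen {v2, v3, v6} = coneGen {v2, v3, v5, v6} ∧
    coneGen {v2, v3, v5} ∩ coneGen {v2, v3, v6} = coneGen {v2, v3} := by
  constructor
  · refine subset_antisymm (Set.union_subset ?_ ?_) coneGen_v2_v3_v5_v6_subset <;>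
      exact coneGen_mono (by intro v; simp only [Set.mem_insert_iff, Set.mem_singleton_iff]; tauto)
  · rw [coneGen_v2_v3_v5, coneGen_v2_v3_v6, coneGen_v2_v3]
    ext x
    constructor
    · rintro ⟨⟨h₀, h₁, h₂⟩, h₀', -, -⟩
      exact ⟨le_antisymm h₀ h₀', by linarith, h₂⟩
    · rintro ⟨h₀, h₁, h₂⟩
      exact ⟨⟨h₀.le, by linarith, h₂⟩, h₀.ge, by linarith, by linarith⟩
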